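/- arXiv:2107.14747 — 2 statements merged into one kernel-verified Lean document; each statement's English description precedes it below -/
import Mathlib

section
/- Let L₁,...,Lₘ be symmetric positive semidefinite n×n matrices, each with 0 a simple eigenvalue with eigenvector 𝟏 and λ₁(Lₖ) > 0. Suppose t* lies in the probability simplex T and ψ* is a unit vector orthogonal to 𝟏 with L_{t*}ψ* = λ₁(L_{t*})ψ*, where L_t = Σ tₖLₖ/λ₁(Lₖ). If all the normalized quadratic forms agree, i.e., ψ*ᵀL₁ψ*/λ₁(L₁) = ⋯ = ψ*ᵀLₘψ*/λ₁(Lₘ), then λ₁(L_{t*}) = max_k ψ*ᵀLₖψ*/λ₁(Lₖ) = min_{x∈X} max_k xᵀLₖx/λ₁(Lₖ), and ψ* attains this minimax. -/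
open Matrix Finset

noncomputable section

/-- The all-ones vector. -/
def onesVec (n : ℕ) : Fin n → ℝ := fun _ => 1

/-- Quadratic form of a matrix. -/
def quadForm {n : ℕ} (L : Matrix (Fin n) (Fin n) ℝ) (x : Fin n → ℝ) : ℝ :=
  x ⬝ᵥ (L *ᵥ x)

/-- Mean-zero unit vectors. -/
def meanZeroUnit (n : ℕ) : Set (Fin n → ℝ) :=
  {x | onesVec n ⬝ᵥ x = 0 ∧ x ⬝ᵥ x = 1}

/-- The second smallest eigenvalue: the infimum of the Rayleigh quotient over
mean-zero unit vectors (for a PSD matrix with kernel spanned by `onesVec`). -/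
def lam1 {n : ℕ} (L : Matrix (Fin n) (Fin n) ℝ) : ℝ :=
  sInf (quadForm L '' meanZeroUnit n)

/-- The probability simplex. -/
def simplex (m : ℕ) : Set (Fin m → ℝ) := {t | (∀ k, 0 ≤ t k) ∧ ∑ k, t k = 1}

/-- The normalized combination `L_t = ∑ t_k L_k / λ₁(L_k)`. -/
def Lt {n m : ℕ} (L : Fin m → Matrix (Fin n) (Fin n) ℝ) (t : Fin m → ℝ) :
    Matrix (Fin n) (Fin n) ℝ := ∑ k, (t k / lam1 (L k)) • L k

/-- The kernel of `L` is spanned by the all-ones vector. -/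
def kernelOnes {n : ℕ} (L : Matrix (Fin n) (Fin n) ℝ) : Prop :=
  ∀ x : Fin n → ℝ, L *ᵥ x = 0 ↔ ∃ c : ℝ, x = fun _ => c

/-- The second smallest eigenvalue of `M` is simple. -/
def simpleLam1 {n : ℕ} (M : Matrix (Fin n) (Fin n) ℝ) : Prop :=
  ∀ x ∈ meanZeroUnit n, ∀ y ∈ meanZeroUnit n,
    M *ᵥ x = lam1 M • x → M *ᵥ y = lam1 M • y → y = x ∨ y = -x

/-- The worst-case normalized smoothness score over the `m` graphs. -/
def maxScore {n m : ℕ} [Nonempty (Fin m)] (L : Fin m → Matrix (Fin n) (Fin n) ℝ)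
    (x : Fin n → ℝ) : ℝ :=
  Finset.univ.sup' Finset.univ_nonempty (fun k => quadForm (L k) x / lam1 (L k))

end

lemma quadForm_Lt {n m : ℕ} (L : Fin m → Matrix (Fin n) (Fin n) ℝ) (t : Fin m → ℝ)
    (x : Fin n → ℝ) :
    quadForm (Lt L t) x = ∑ k, (t k / lam1 (L k)) * quadForm (L k) x := by
  unfold quadForm Lt
  set c : Fin m → ℝ := fun k => t k / lam1 (L k) with hcdef
  have h1 : (∑ k, c k • L k) *ᵥ x = ∑ k, c k • (L k *ᵥ x) := by
    ext i
    simp only [Matrix.mulVec, dotProduct, Matrix.sum_apply, Matrix.smul_apply,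
      smul_eq_mul, Finset.sum_apply, Pi.smul_apply, Finset.sum_mul, Finset.mul_sum]
    rw [Finset.sum_comm]
    exact Finset.sum_congr rfl fun k _ => Finset.sum_congr rfl fun j _ => by ring
  rw [h1]
  simp only [dotProduct, Finset.sum_apply, Pi.smul_apply, smul_eq_mul,
    Finset.mul_sum]
  rw [Finset.sum_comm]
  exact Finset.sum_congr rfl fun k _ => Finset.sum_congr rfl fun i _ => by ring

/-- if the optimizer's normalized quadratic forms are balanced,
the minimax sandwich collapses and ψ* attains the minimax. -/
theorem balanced_implies_minimax {n m : ℕ} [Nonempty (Fin m)]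
    (L : Fin m → Matrix (Fin n) (Fin n) ℝ)
    (hsymm : ∀ k, (L k).IsSymm) (hpsd : ∀ k, (L k).PosSemidef)
    (hker : ∀ k, kernelOnes (L k)) (hpos : ∀ k, 0 < lam1 (L k))
    (tstar : Fin m → ℝ) (htstar : tstar ∈ simplex m)
    (ψ : Fin n → ℝ) (hψX : ψ ∈ meanZeroUnit n)
    (hψeig : Lt L tstar *ᵥ ψ = lam1 (Lt L tstar) • ψ)
    (hbal : ∀ j k : Fin m,
      quadForm (L j) ψ / lam1 (L j) = quadForm (L k) ψ / lam1 (L k)) :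
    lam1 (Lt L tstar) = maxScore L ψ ∧
      (∀ x ∈ meanZeroUnit n, maxScore L ψ ≤ maxScore L x) ∧
      lam1 (Lt L tstar) = sInf (maxScore L '' meanZeroUnit n) := by
  obtain ⟨ht0, ht1⟩ := htstar
  obtain ⟨hψ0, hψ1⟩ := hψX
  set k₀ : Fin m := Classical.arbitrary (Fin m)
  set c : ℝ := quadForm (L k₀) ψ / lam1 (L k₀) with hc
  have hmax : maxScore L ψ = c := by
    unfold maxScore
    rw [Finset.sup'_congr Finset.univ_nonempty rfl (g := fun _ => c)
      (fun k _ => hbal k k₀)]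
    exact Finset.sup'_const _ _
  have hq : quadForm (Lt L tstar) ψ = c := by
    rw [quadForm_Lt]
    have h : ∀ k ∈ Finset.univ, tstar k / lam1 (L k) * quadForm (L k) ψ = tstar k * c := by
      intro k _
      rw [div_mul_eq_mul_div, mul_div_assoc, hbal k k₀]
    rw [Finset.sum_congr rfl h, ← Finset.sum_mul, ht1, one_mul]
  have hlam : lam1 (Lt L tstar) = c := by
    have h : quadForm (Lt L tstar) ψ = lam1 (Lt L tstar) := by
      simp [quadForm, hψeig, dotProduct_smul, smul_eq_mul, hψ1]
    rw [← h, hq]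
  have hLtpsd : ∀ x : Fin n → ℝ, 0 ≤ quadForm (Lt L tstar) x := by
    intro x
    rw [quadForm_Lt]
    refine Finset.sum_nonneg fun k _ => mul_nonneg (div_nonneg (ht0 k) (hpos k).le) ?_
    have h := (hpsd k).dotProduct_mulVec_nonneg x
    simpa [quadForm, star_trivial] using h
  have hbdd : BddBelow (quadForm (Lt L tstar) '' meanZeroUnit n) := by
    refine ⟨0, ?_⟩
    rintro _ ⟨x, -, rfl⟩
    exact hLtpsd x
  have hlow : ∀ x ∈ meanZeroUnit n, lam1 (Lt L tstar) ≤ maxScore L x := by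
    intro x hx
    have h1 : lam1 (Lt L tstar) ≤ quadForm (Lt L tstar) x :=
      csInf_le hbdd ⟨x, hx, rfl⟩
    have h2 : quadForm (Lt L tstar) x ≤ maxScore L x := by
      rw [quadForm_Lt]
      calc ∑ k, tstar k / lam1 (L k) * quadForm (L k) x
          = ∑ k, tstar k * (quadForm (L k) x / lam1 (L k)) := by
            refine Finset.sum_congr rfl fun k _ => ?_
            rw [div_mul_eq_mul_div, mul_div_assoc]
        _ ≤ ∑ k, tstar k * maxScore L x := by
            refine Finset.sum_le_sum fun k _ => mul_le_mul_of_nonneg_left ?_ (ht0 k)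
            unfold maxScore
            exact Finset.le_sup' (fun j => quadForm (L j) x / lam1 (L j)) (Finset.mem_univ k)
        _ = maxScore L x := by rw [← Finset.sum_mul, ht1, one_mul]
    linarith
  have hb2 : BddBelow (maxScore L '' meanZeroUnit n) := by
    refine ⟨lam1 (Lt L tstar), ?_⟩
    rintro _ ⟨x, hx, rfl⟩
    exact hlow x hx
  refine ⟨hlam.trans hmax.symm, ?_, ?_⟩
  · intro x hx
    rw [hmax, ← hlam]
    exact hlow x hx
  · refine le_antisymm ?_ ?_
    · refine le_csInf ⟨maxScore L ψ, ψ, ⟨hψ0, hψ1⟩, rfl⟩ ?_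
      rintro _ ⟨x, hx, rfl⟩
      exact hlow x hx
    · have h3 : sInf (maxScore L '' meanZeroUnit n) ≤ maxScore L ψ :=
        csInf_le hb2 ⟨ψ, ⟨hψ0, hψ1⟩, rfl⟩
      rw [hlam, ← hmax]
      exact h3
end

section
/- Let L₁,...,Lₘ be symmetric positive semidefinite n×n matrices with common kernel spanned by 𝟏, λ₁(Lₖ) > 0, and suppose λ₁(L_t) is simple for all t in the probability simplex T. If t* is an interior maximizer of t ↦ λ₁(L_t) over T, then the corresponding unit eigenvector ψ* = ψ₁(L_{t*}) satisfies ψ*ᵀL₁ψ*/λ₁(L₁) = ψ*ᵀL₂ψ*/λ₁(L₂) = ⋯ = ψ*ᵀLₘψ*/λ₁(Lₘ), i.e., the optimal common variable is indifferent between all m smoothness measures. -/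
open Matrix Finset

noncomputable section

noncomputable section
namespace Aux11

def qfLin {n : ℕ} (x : Fin n → ℝ) : Matrix (Fin n) (Fin n) ℝ →ₗ[ℝ] ℝ where
  toFun M := quadForm M x
  map_add' A B := by simp [quadForm, Matrix.add_mulVec, dotProduct_add]
  map_smul' c A := by simp [quadForm, Matrix.smul_mulVec, dotProduct_smul, smul_eq_mul]

lemma quadForm_sum {n m : ℕ} (c : Fin m → ℝ) (L : Fin m → Matrix (Fin n) (Fin n) ℝ) (x : Fin n → ℝ) :
    quadForm (∑ k, c k • L k) x = ∑ k, c k * quadForm (L k) x := by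
  calc quadForm (∑ k, c k • L k) x = qfLin x (∑ k, c k • L k) := rfl
    _ = ∑ k, qfLin x (c k • L k) := map_sum (qfLin x) _ Finset.univ
    _ = ∑ k, c k * quadForm (L k) x :=
      Finset.sum_congr rfl fun k _ => by rw [_root_.map_smul]; rfl

lemma quadForm_smul_vec {n : ℕ} (M : Matrix (Fin n) (Fin n) ℝ) (c : ℝ) (x : Fin n → ℝ) :
    quadForm M (c • x) = c^2 * quadForm M x := by
  simp [quadForm, Matrix.mulVec_smul, smul_dotProduct, dotProduct_smul, smul_eq_mul]
  ring

lemma quadForm_neg_vec {n : ℕ} (M : Matrix (Fin n) (Fin n) ℝ) (x : Fin n → ℝ) :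
    quadForm M (-x) = quadForm M x := by
  have := quadForm_smul_vec M (-1) x
  simpa using this

lemma quadForm_add_vec {n : ℕ} (M : Matrix (Fin n) (Fin n) ℝ) (hM : M.IsSymm) (x y : Fin n → ℝ) :
    quadForm M (x + y) = quadForm M x + 2 * (y ⬝ᵥ (M *ᵥ x)) + quadForm M y := by
  have hxy : x ⬝ᵥ (M *ᵥ y) = y ⬝ᵥ (M *ᵥ x) := by
    rw [Matrix.dotProduct_mulVec, ← Matrix.mulVec_transpose, hM.eq, dotProduct_comm]
  simp [quadForm, Matrix.mulVec_add, add_dotProduct, dotProduct_add, hxy]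
  ring

lemma sum_mulVec {n m : ℕ} (A : Fin m → Matrix (Fin n) (Fin n) ℝ) (x : Fin n → ℝ) :
    (∑ k, A k) *ᵥ x = ∑ k, A k *ᵥ x := by
  ext i
  simp [Matrix.mulVec, dotProduct, Finset.sum_apply, Matrix.sum_apply, Finset.sum_mul]
  exact Finset.sum_comm

lemma dot_self_nonneg {n : ℕ} (x : Fin n → ℝ) : 0 ≤ x ⬝ᵥ x :=
  Finset.sum_nonneg fun i _ => mul_self_nonneg _

/-- `lam1 M ≤ quadForm M x` for mean-zero unit `x`, given a lower bound. -/
lemma lam1_le {n : ℕ} {M : Matrix (Fin n) (Fin n) ℝ}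
    (hbdd : BddBelow (quadForm M '' meanZeroUnit n)) {x : Fin n → ℝ}
    (hx : x ∈ meanZeroUnit n) : lam1 M ≤ quadForm M x :=
  csInf_le hbdd ⟨x, hx, rfl⟩

/-- Rayleigh inequality for general mean-zero vectors. -/
lemma rayleigh {n : ℕ} {M : Matrix (Fin n) (Fin n) ℝ}
    (hbdd : BddBelow (quadForm M '' meanZeroUnit n)) {z : Fin n → ℝ}
    (hz : onesVec n ⬝ᵥ z = 0) : lam1 M * (z ⬝ᵥ z) ≤ quadForm M z := by
  rcases eq_or_ne z 0 with rfl | hz0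
  · simp [quadForm]
  · have hzz : 0 < z ⬝ᵥ z :=
      lt_of_le_of_ne (dot_self_nonneg z) (Ne.symm (fun h => hz0 (dotProduct_self_eq_zero.mp h)))
    set c : ℝ := Real.sqrt (z ⬝ᵥ z) with hc
    have hc0 : 0 < c := Real.sqrt_pos.mpr hzz
    have hc2 : c ^ 2 = z ⬝ᵥ z := Real.sq_sqrt hzz.le
    have hu : (c⁻¹ • z) ∈ meanZeroUnit n := by
      constructor
      · simp [dotProduct_smul, hz]
      · have : (c⁻¹ • z) ⬝ᵥ (c⁻¹ • z) = c⁻¹ * (c⁻¹ * (z ⬝ᵥ z)) := by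
          simp [smul_dotProduct, dotProduct_smul, smul_eq_mul]
        rw [this, ← hc2, sq]
        field_simp

    have h1 : lam1 M ≤ quadForm M (c⁻¹ • z) := lam1_le hbdd hu
    rw [quadForm_smul_vec] at h1
    have h2 : (c⁻¹)^2 = (z ⬝ᵥ z)⁻¹ := by rw [← hc2]; simp
    rw [h2] at h1
    calc lam1 M * (z ⬝ᵥ z) ≤ ((z ⬝ᵥ z)⁻¹ * quadForm M z) * (z ⬝ᵥ z) := by
          exact mul_le_mul_of_nonneg_right h1 hzz.le
      _ = quadForm M z := by field_simp

/-- A minimizer of the Rayleigh quotient is an eigenvector. -/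
lemma minimizer_eigen {n : ℕ} {M : Matrix (Fin n) (Fin n) ℝ} (hM : M.IsSymm)
    (hones : M *ᵥ onesVec n = 0)
    (hbdd : BddBelow (quadForm M '' meanZeroUnit n))
    {x : Fin n → ℝ} (hx : x ∈ meanZeroUnit n) (hmin : quadForm M x = lam1 M) :
    M *ᵥ x = lam1 M • x := by
  set lam := lam1 M with hlam
  set r : Fin n → ℝ := M *ᵥ x - lam • x with hr
  have honesMx : ∀ w : Fin n → ℝ, onesVec n ⬝ᵥ (M *ᵥ w) = 0 := by
    intro w
    rw [Matrix.dotProduct_mulVec, ← Matrix.mulVec_transpose, hM.eq, hones]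
    simp
  have hrones : onesVec n ⬝ᵥ r = 0 := by
    rw [hr, dotProduct_sub, honesMx, dotProduct_smul, hx.1]
    simp
  have key : ∀ y : Fin n → ℝ, onesVec n ⬝ᵥ y = 0 → y ⬝ᵥ r = 0 := by
    intro y hy
    set a : ℝ := quadForm M y - lam * (y ⬝ᵥ y) with ha
    set b : ℝ := 2 * (y ⬝ᵥ r) with hb
    have ha0 : 0 ≤ a := by
      have := rayleigh hbdd hy
      simp only [ha]
      linarith
    have hquad : ∀ s : ℝ, 0 ≤ a * s^2 + b * s := by
      intro s
      have hzm : onesVec n ⬝ᵥ (x + s • y) = 0 := by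
        rw [dotProduct_add, dotProduct_smul, hx.1, hy]; simp
      have hray := rayleigh hbdd hzm
      have hexp : quadForm M (x + s • y) = quadForm M x + 2 * (s * (y ⬝ᵥ (M *ᵥ x)))
          + s^2 * quadForm M y := by
        rw [quadForm_add_vec M hM, smul_dotProduct, quadForm_smul_vec]
        simp [smul_eq_mul]
      have hdotexp : (x + s • y) ⬝ᵥ (x + s • y)
          = x ⬝ᵥ x + 2 * (s * (y ⬝ᵥ x)) + s^2 * (y ⬝ᵥ y) := by
        simp [dotProduct_add, add_dotProduct, smul_dotProduct,
          dotProduct_smul, smul_eq_mul, dotProduct_comm y x]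
        ring
      have hyr : y ⬝ᵥ r = y ⬝ᵥ (M *ᵥ x) - lam * (y ⬝ᵥ x) := by
        rw [hr, dotProduct_sub, dotProduct_smul]; simp
      have hx2 : x ⬝ᵥ x = 1 := hx.2
      have hqx : quadForm M x = lam := hmin
      rw [hexp, hdotexp, hqx, hx2] at hray
      simp only [ha, hb, hyr]
      nlinarith [hray]
    have hb0 : b = 0 := by
      by_contra hbne
      have hA1 : (0:ℝ) < a + 1 := by linarith
      have hq := hquad (-(b / (a + 1)))
      have hval : a * (-(b / (a + 1)))^2 + b * (-(b / (a + 1))) = -(b^2 / (a+1)^2) := by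
        field_simp
        ring
      rw [hval] at hq
      have : b^2 / (a+1)^2 > 0 := div_pos (by positivity) (by positivity)
      linarith
    have : y ⬝ᵥ r = 0 := by rw [hb] at hb0; linarith
    exact this
  have hrr : r ⬝ᵥ r = 0 := key r hrones
  have hr0 : r = 0 := dotProduct_self_eq_zero.mp hrr
  have := sub_eq_zero.mp hr0
  exact this

lemma cont_quad {n : ℕ} (M : Matrix (Fin n) (Fin n) ℝ) :
    Continuous (fun x : Fin n → ℝ => quadForm M x) := by
  simp only [quadForm, dotProduct, Matrix.mulVec]
  fun_prop

lemma cont_dot_const {n : ℕ} (v : Fin n → ℝ) :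
    Continuous (fun x : Fin n → ℝ => v ⬝ᵥ x) := by
  simp only [dotProduct]
  fun_prop

lemma cont_dot_self {n : ℕ} : Continuous (fun x : Fin n → ℝ => x ⬝ᵥ x) := by
  simp only [dotProduct]
  fun_prop

lemma isClosed_mzu {n : ℕ} : IsClosed (meanZeroUnit n) := by
  have : meanZeroUnit n =
      (fun x : Fin n → ℝ => onesVec n ⬝ᵥ x) ⁻¹' {0} ∩ (fun x : Fin n → ℝ => x ⬝ᵥ x) ⁻¹' {1} := by
    ext x; simp [meanZeroUnit, Set.mem_preimage]
  rw [this]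
  exact ((isClosed_singleton.preimage (cont_dot_const _))).inter
    (isClosed_singleton.preimage cont_dot_self)

lemma isCompact_mzu {n : ℕ} : IsCompact (meanZeroUnit n) := by
  apply IsCompact.of_isClosed_subset (isCompact_closedBall (0 : Fin n → ℝ) 1) isClosed_mzu
  intro x hx
  have hx2 : x ⬝ᵥ x = 1 := hx.2
  simp only [Metric.mem_closedBall, dist_zero_right]
  rw [pi_norm_le_iff_of_nonneg (by norm_num : (0:ℝ) ≤ 1)]
  intro i
  have h1 : x i * x i ≤ ∑ j, x j * x j :=
    Finset.single_le_sum (fun j _ => mul_self_nonneg (x j)) (Finset.mem_univ i)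
  rw [show ∑ j, x j * x j = x ⬝ᵥ x from rfl, hx2] at h1
  rw [Real.norm_eq_abs]
  nlinarith [abs_nonneg (x i), sq_abs (x i), sq (x i)]

lemma exists_min {n : ℕ} (M : Matrix (Fin n) (Fin n) ℝ)
    (hne : (meanZeroUnit n).Nonempty) :
    ∃ x ∈ meanZeroUnit n, quadForm M x = lam1 M := by
  obtain ⟨x, hx, hmin⟩ := isCompact_mzu.exists_isMinOn hne (cont_quad M).continuousOn
  refine ⟨x, hx, ?_⟩
  have : IsLeast (quadForm M '' meanZeroUnit n) (quadForm M x) :=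
    ⟨⟨x, hx, rfl⟩, by rintro v ⟨y, hy, rfl⟩; exact hmin hy⟩
  exact (this.csInf_eq).symm

end Aux11
end

/-- at an interior maximizer of `t ↦ λ₁(L_t)`, the optimal common
variable is indifferent between all smoothness measures. -/
theorem interior_maximizer_balanced {n m : ℕ} [Nonempty (Fin m)]
    (L : Fin m → Matrix (Fin n) (Fin n) ℝ)
    (hsymm : ∀ k, (L k).IsSymm) (hpsd : ∀ k, (L k).PosSemidef)
    (hker : ∀ k, kernelOnes (L k)) (hpos : ∀ k, 0 < lam1 (L k))
    (hsimple : ∀ t ∈ simplex m, simpleLam1 (Lt L t))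
    (tstar : Fin m → ℝ) (htstar : tstar ∈ simplex m)
    (hinterior : ∀ k, 0 < tstar k)
    (hmax : ∀ t ∈ simplex m, lam1 (Lt L t) ≤ lam1 (Lt L tstar))
    (ψ : Fin n → ℝ) (hψX : ψ ∈ meanZeroUnit n)
    (hψeig : Lt L tstar *ᵥ ψ = lam1 (Lt L tstar) • ψ) :
    ∀ j k : Fin m,
      quadForm (L j) ψ / lam1 (L j) = quadForm (L k) ψ / lam1 (L k) := by
  classical
  set q : Fin m → (Fin n → ℝ) → ℝ := fun k x => quadForm (L k) x / lam1 (L k) with hq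
  have hquadLt : ∀ (t : Fin m → ℝ) (x : Fin n → ℝ),
      quadForm (Lt L t) x = ∑ k, t k * q k x := by
    intro t x
    rw [Lt, Aux11.quadForm_sum]
    exact Finset.sum_congr rfl fun k _ => by simp only [hq]; ring
  have hq0 : ∀ (k : Fin m) (x : Fin n → ℝ), 0 ≤ q k x := by
    intro k x
    apply div_nonneg _ (hpos k).le
    have := (hpsd k).dotProduct_mulVec_nonneg x
    simpa [quadForm] using this
  have hLtnn : ∀ t ∈ simplex m, ∀ x, 0 ≤ quadForm (Lt L t) x := by
    intro t ht x
    rw [hquadLt]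
    exact Finset.sum_nonneg fun k _ => mul_nonneg (ht.1 k) (hq0 k x)
  have hbdd : ∀ t ∈ simplex m, BddBelow (quadForm (Lt L t) '' meanZeroUnit n) := by
    intro t ht
    exact ⟨0, by rintro v ⟨x, hx, rfl⟩; exact hLtnn t ht x⟩
  have hLtsymm : ∀ t : Fin m → ℝ, (Lt L t).IsSymm := by
    intro t
    unfold Matrix.IsSymm
    rw [Lt, Matrix.transpose_sum]
    exact Finset.sum_congr rfl fun k _ => by rw [Matrix.transpose_smul, (hsymm k).eq]
  have hLt1 : ∀ t : Fin m → ℝ, Lt L t *ᵥ onesVec n = 0 := by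
    intro t
    rw [Lt, Aux11.sum_mulVec]
    apply Finset.sum_eq_zero
    intro k _
    rw [Matrix.smul_mulVec, (hker k (onesVec n)).mpr ⟨1, rfl⟩, smul_zero]
  set lamS := lam1 (Lt L tstar) with hlamS
  have hψqf : quadForm (Lt L tstar) ψ = lamS := by
    rw [quadForm, hψeig, dotProduct_smul, hψX.2]
    simp
  have hlamS0 : 0 ≤ lamS := hψqf ▸ hLtnn tstar htstar ψ
  have main : ∀ j l : Fin m, q j ψ ≤ q l ψ := by
    intro j l
    by_cases hjl : j = l
    · subst hjl; exact le_refl _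
    set tl := tstar l with htldef
    have htl : 0 < tl := hinterior l
    set C : ℝ := 2 * lamS / tl with hC
    set ε : ℕ → ℝ := fun nn => tl / (2 * (nn + 1)) with hε
    have hε0 : ∀ nn, 0 < ε nn := by
      intro nn; apply div_pos htl; positivity
    have hεle : ∀ nn, ε nn ≤ tl / 2 := by
      intro nn
      rw [hε]
      rw [div_le_div_iff₀ (by positivity) two_pos]
      nlinarith [htl, Nat.cast_nonneg (α := ℝ) nn]
    set tE : ℕ → Fin m → ℝ := fun nn i =>
      tstar i + (if i = j then ε nn else 0) - (if i = l then ε nn else 0) with htE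
    have htEmem : ∀ nn, tE nn ∈ simplex m := by
      intro nn
      constructor
      · intro i
        simp only [htE]
        by_cases hij : i = j
        · subst hij
          simp only [eq_self_iff_true, if_true, if_neg hjl]
          linarith [hinterior i, hε0 nn]
        · by_cases hil : i = l
          · subst hil
            simp only [if_neg hij, eq_self_iff_true, if_true]
            linarith [hεle nn, htl, htldef]
          · simp [hij, hil, (hinterior i).le]
      · simp only [htE, Finset.sum_sub_distrib, Finset.sum_add_distrib,
          Finset.sum_ite_eq' Finset.univ, Finset.mem_univ, if_true, htstar.2]
        ring
    have hsumE : ∀ (nn : ℕ) (x : Fin n → ℝ), quadForm (Lt L (tE nn)) x =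
        quadForm (Lt L tstar) x + ε nn * q j x - ε nn * q l x := by
      intro nn x
      rw [hquadLt, hquadLt]
      simp only [htE, sub_mul, add_mul, ite_mul, zero_mul,
        Finset.sum_sub_distrib, Finset.sum_add_distrib,
        Finset.sum_ite_eq' Finset.univ, Finset.mem_univ, if_true]
    have hexists : ∀ nn : ℕ, ∃ x ∈ meanZeroUnit n,
        quadForm (Lt L (tE nn)) x = lam1 (Lt L (tE nn)) :=
      fun nn => Aux11.exists_min _ ⟨ψ, hψX⟩
    choose xs hxsmem hxsmin using hexists
    have hfacts : ∀ nn : ℕ, q j (xs nn) - q l (xs nn) ≤ 0 ∧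
        quadForm (Lt L tstar) (xs nn) ≤ lamS + C * ε nn := by
      intro nn
      set A := quadForm (Lt L tstar) (xs nn) with hA
      have hA1 : lamS ≤ A := Aux11.lam1_le (hbdd tstar htstar) (hxsmem nn)
      have hA0 : 0 ≤ A := le_trans hlamS0 hA1
      have h2 : quadForm (Lt L (tE nn)) (xs nn) = A + ε nn * q j (xs nn) - ε nn * q l (xs nn) :=
        hsumE nn (xs nn)
      have h4 : lam1 (Lt L (tE nn)) ≤ lamS := hmax _ (htEmem nn)
      have h5 : A + ε nn * q j (xs nn) - ε nn * q l (xs nn) ≤ lamS := by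
        rw [← h2, hxsmin nn]; exact h4
      constructor
      · nlinarith [hε0 nn, hA1]
      · -- A ≤ lamS + ε * q l (xs nn)
        have h6 : A ≤ lamS + ε nn * q l (xs nn) := by
          nlinarith [mul_nonneg (hε0 nn).le (hq0 j (xs nn))]
        have h7 : tl * q l (xs nn) ≤ A := by
          rw [hA, hquadLt]
          have := Finset.single_le_sum
            (f := fun k => tstar k * q k (xs nn))
            (fun k _ => mul_nonneg (htstar.1 k) (hq0 k (xs nn))) (Finset.mem_univ l)
          simpa [htldef] using this
        have h8 : q l (xs nn) ≤ A / tl := by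
          rw [le_div_iff₀ htl]
          nlinarith [h7]
        have h9 : A ≤ lamS + ε nn * (A / tl) :=
          le_trans h6 (by nlinarith [mul_le_mul_of_nonneg_left h8 (hε0 nn).le])
        have hA2 : A ≤ 2 * lamS := by
          have e1 : ε nn * (A / tl) ≤ (tl / 2) * (A / tl) :=
            mul_le_mul_of_nonneg_right (hεle nn) (by positivity)
          have e2 : (tl / 2) * (A / tl) = A / 2 := by field_simp
          nlinarith [h9]
        have e3 : ε nn * (A / tl) ≤ ε nn * (2 * lamS / tl) := by
          gcongr
        nlinarith [h9, e3]
    obtain ⟨xinf, hxinf, φ, hφ, hconv⟩ := Aux11.isCompact_mzu.tendsto_subseq hxsmem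
    have hFc : Continuous (fun x : Fin n → ℝ => quadForm (Lt L tstar) x) :=
      Aux11.cont_quad _
    have hF : Filter.Tendsto (fun nn => quadForm (Lt L tstar) (xs (φ nn)))
        Filter.atTop (nhds (quadForm (Lt L tstar) xinf)) :=
      (hFc.tendsto xinf).comp hconv
    have hεtendsto : Filter.Tendsto (fun nn : ℕ => lamS + C * ε nn)
        Filter.atTop (nhds lamS) := by
      have h0 : Filter.Tendsto ε Filter.atTop (nhds 0) := by
        have h1 : Filter.Tendsto (fun nn : ℕ => (nn : ℝ)) Filter.atTop Filter.atTop :=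
          tendsto_natCast_atTop_atTop
        have h2 : Filter.Tendsto (fun nn : ℕ => ((nn : ℝ) + 1)) Filter.atTop Filter.atTop :=
          Filter.tendsto_atTop_add_const_right _ 1 h1
        have h3 : Filter.Tendsto (fun nn : ℕ => 2 * ((nn : ℝ) + 1)) Filter.atTop Filter.atTop :=
          h2.const_mul_atTop two_pos
        have h4 := h3.inv_tendsto_atTop
        have h5 := h4.const_mul tl
        simp only [hε, div_eq_mul_inv]
        simpa using h5
      have := ((h0.const_mul C).const_add lamS)
      simpa using this
    have hεφ : Filter.Tendsto (fun nn : ℕ => lamS + C * ε (φ nn))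
        Filter.atTop (nhds lamS) := hεtendsto.comp hφ.tendsto_atTop
    have hle : quadForm (Lt L tstar) xinf ≤ lamS :=
      le_of_tendsto_of_tendsto' hF hεφ (fun nn => (hfacts (φ nn)).2)
    have hge : lamS ≤ quadForm (Lt L tstar) xinf :=
      Aux11.lam1_le (hbdd tstar htstar) hxinf
    have hqfinf : quadForm (Lt L tstar) xinf = lamS := le_antisymm hle hge
    have heiginf : Lt L tstar *ᵥ xinf = lamS • xinf :=
      Aux11.minimizer_eigen (hLtsymm tstar) (hLt1 tstar) (hbdd tstar htstar) hxinf hqfinf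
    have hpm : ψ = xinf ∨ ψ = -xinf :=
      hsimple tstar htstar xinf hxinf ψ hψX heiginf hψeig
    have hGc : Continuous (fun x : Fin n → ℝ => q j x - q l x) := by
      simp only [hq]
      exact ((Aux11.cont_quad (L j)).div_const _).sub ((Aux11.cont_quad (L l)).div_const _)
    have hSinf : q j xinf - q l xinf ≤ 0 :=
      le_of_tendsto ((hGc.tendsto xinf).comp hconv)
        (Filter.Eventually.of_forall fun nn => (hfacts (φ nn)).1)
    have hqneg : ∀ k : Fin m, q k (-xinf) = q k xinf := by
      intro k
      simp only [hq, Aux11.quadForm_neg_vec]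
    rcases hpm with h | h
    · rw [h]; linarith
    · rw [h, hqneg j, hqneg l]; linarith
  intro j k
  exact le_antisymm (main j k) (main k j)
end
end
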